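/- Fix i ∈ {1,…,m} and ε > 0, and let V_i(θ) = ∑_{j=1}^m θ_j G(a_j)²/S³ + G(a_i)²/(θ_i S) − 2·G(a_i)²/S² − D_i(θ)² (the variance of the single-sample REINFORCE random variable R_i). Then for every positive integer N with N ≤ V_i(θ)/(D_i(θ)² + ε) there exists a temperature τ̃ > 0 such that the mean squared error of the N-sample Smoothed-Autodiff estimator with temperature τ̃, namely (E_Z[∂_{θ_i} G(h_{τ̃}(Z,θ))] − D_i(θ))² + (1/N)·Var_Z(∂_{θ_i} G(h_{τ̃}(Z,θ))), is at most D_i(θ)² + ε, which in turn is at most the mean squared error V_i(θ)/N of the N-sample REINFORCE estimator. -/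

import Mathlib

open Real Finset Filter MeasureTheory

/-- `S = ∑_j θ_j`. -/
noncomputable def Stot {m : ℕ} (θ : Fin m → ℝ) : ℝ := ∑ j, θ j

/-- The Gumbel(0,1) measure on ℝ, with Lebesgue density `exp(−x − exp(−x))`. -/
noncomputable def gumbel : Measure ℝ :=
  volume.withDensity fun x => ENNReal.ofReal (Real.exp (-x - Real.exp (-x)))

/-- The law of `Z = (Z_1,…,Z_m)` with i.i.d. Gumbel(0,1) coordinates. -/
noncomputable def gumbelPi (m : ℕ) : Measure (Fin m → ℝ) :=
  Measure.pi fun _ => gumbel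

/-- Softmax weight `w_i^τ(z,θ) = exp((log θ_i + z_i)/τ) / ∑_j exp((log θ_j + z_j)/τ)`. -/
noncomputable def softW {m : ℕ} (τ : ℝ) (θ z : Fin m → ℝ) (i : Fin m) : ℝ :=
  Real.exp ((Real.log (θ i) + z i) / τ) / ∑ j, Real.exp ((Real.log (θ j) + z j) / τ)

/-- Smoothed action `h_τ(z,θ) = ∑_i a_i · w_i^τ(z,θ)`. -/
noncomputable def hTau {m : ℕ} (τ : ℝ) (a θ z : Fin m → ℝ) : ℝ :=
  ∑ i, a i * softW τ θ z i

/-- Single-sample Smoothed-Autodiff gradient `∂_{θ_i} G(h_τ(z,θ))`. -/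
noncomputable def saGrad {m : ℕ} (τ : ℝ) (a : Fin m → ℝ) (G : ℝ → ℝ)
    (θ : Fin m → ℝ) (i : Fin m) (z : Fin m → ℝ) : ℝ :=
  deriv (fun t : ℝ => G (hTau τ a (Function.update θ i t) z)) (θ i)

/-- `Var_Z(∂_{θ_i} G(h_τ(Z,θ)))` for `Z` with i.i.d. Gumbel(0,1) coordinates. -/
noncomputable def saVar {m : ℕ} (τ : ℝ) (a : Fin m → ℝ) (G : ℝ → ℝ)
    (θ : Fin m → ℝ) (i : Fin m) : ℝ :=
  (∫ z, (saGrad τ a G θ i z) ^ 2 ∂(gumbelPi m)) -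
    (∫ z, saGrad τ a G θ i z ∂(gumbelPi m)) ^ 2

/-- `V_i(θ) = ∑_j θ_j G(a_j)²/S³ + G(a_i)²/(θ_i S) − 2·G(a_i)²/S² − D_i(θ)²`, the variance
of the single-sample REINFORCE random variable `R_i`, as a function of `D_i(θ)`. -/
noncomputable def Vrf {m : ℕ} (a : Fin m → ℝ) (G : ℝ → ℝ) (θ : Fin m → ℝ)
    (i : Fin m) (Di : ℝ) : ℝ :=
  (∑ j, θ j * G (a j) ^ 2 / (Stot θ) ^ 3) + G (a i) ^ 2 / (θ i * Stot θ)
    - 2 * G (a i) ^ 2 / (Stot θ) ^ 2 - Di ^ 2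

open Topology

/-! The Smoothed-Autodiff gradient is `G'(h_τ) · w_i (a_i − h_τ) / (τ θ_i)`. Since `h_τ` is a
convex combination of the actions, the gradient is bounded by `Ḡ ∑_j |a_i − a_j| / (θ_i τ)`
uniformly in `z`, so on the finite Gumbel measure (its density is dominated by `exp (-|x|)`) its
first and second moments vanish as `τ → ∞`. The Smoothed-Autodiff MSE therefore tends to
`D_i(θ)²` and drops below `D_i(θ)² + ε` at a large temperature; the comparison with REINFORCE is
a rearrangement of the bound on `N`. -/

lemma integrable_exp_neg_abs : Integrable fun x : ℝ => exp (-|x|) := by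
  rw [← integrableOn_univ, ← Set.Iic_union_Ioi (a := 0), integrableOn_union]
  exact ⟨(integrableOn_exp_Iic 0).congr_fun (fun x hx => by simp [abs_of_nonpos hx.out])
      measurableSet_Iic,
    (exp_neg_integrableOn_Ioi 0 one_pos).congr_fun (fun x hx => by simp [abs_of_pos hx.out])
      measurableSet_Ioi⟩

lemma exp_neg_sub_exp_neg_le_exp_neg_abs (x : ℝ) : exp (-x - exp (-x)) ≤ exp (-|x|) := by
  rw [exp_le_exp]
  rcases le_total 0 x with hx | hx
  · rw [abs_of_nonneg hx]
    linarith [exp_pos (-x)]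
  · rw [abs_of_nonpos hx, neg_neg]
    nlinarith [quadratic_le_exp_of_nonneg (neg_nonneg.2 hx)]

instance : IsFiniteMeasure gumbel := by
  refine isFiniteMeasure_withDensity_ofReal (integrable_exp_neg_abs.mono' ?_ ?_).2
  · fun_prop
  · exact ae_of_all _ fun x => by
      rw [norm_of_nonneg (exp_pos _).le]; exact exp_neg_sub_exp_neg_le_exp_neg_abs x

instance (m : ℕ) : IsFiniteMeasure (gumbelPi m) := by
  unfold gumbelPi; infer_instance

lemma tendsto_integral_zero_of_norm_le {ι α E : Type*} [MeasurableSpace α]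
    [NormedAddCommGroup E] [NormedSpace ℝ E] {l : Filter ι} {μ : Measure α} [IsFiniteMeasure μ]
    {f : ι → α → E} {g : ι → ℝ} (hfg : ∀ᶠ t in l, ∀ x, ‖f t x‖ ≤ g t)
    (hg : Tendsto g l (𝓝 0)) : Tendsto (fun t => ∫ x, f t x ∂μ) l (𝓝 0) :=
  squeeze_zero_norm' (hfg.mono fun _ ht => norm_integral_le_of_norm_le_const (ae_of_all _ ht))
    (by simpa using hg.mul_const (μ.real Set.univ))

section Softmax

variable {m : ℕ} (τ : ℝ) (a θ z : Fin m → ℝ)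

lemma hTau_eq_div : hTau τ a θ z =
    (∑ j, a j * exp ((log (θ j) + z j) / τ)) / ∑ j, exp ((log (θ j) + z j) / τ) := by
  simp only [hTau, softW, sum_div, mul_div_assoc]

variable [Nonempty (Fin m)]

lemma sum_exp_pos : 0 < ∑ j, exp ((log (θ j) + z j) / τ) :=
  sum_pos (fun _ _ => exp_pos _) univ_nonempty

lemma softW_nonneg (i : Fin m) : 0 ≤ softW τ θ z i :=
  div_nonneg (exp_pos _).le (sum_exp_pos τ θ z).le

lemma sum_softW : ∑ j, softW τ θ z j = 1 := by
  simp only [softW]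
  rw [← sum_div, div_self (sum_exp_pos τ θ z).ne']

lemma softW_le_one (i : Fin m) : softW τ θ z i ≤ 1 :=
  sum_softW τ θ z ▸ single_le_sum (fun j _ => softW_nonneg τ θ z j) (mem_univ i)

lemma hTau_mem_convexHull : hTau τ a θ z ∈ convexHull ℝ (Set.range a) := by
  rw [show hTau τ a θ z = ∑ j, softW τ θ z j • a j by simp only [hTau, smul_eq_mul, mul_comm]]
  exact (convex_convexHull ℝ _).sum_mem (fun j _ => softW_nonneg τ θ z j) (sum_softW τ θ z)
    fun j _ => subset_convexHull ℝ _ (Set.mem_range_self j)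

lemma abs_sub_hTau_le (i : Fin m) : |a i - hTau τ a θ z| ≤ ∑ j, |a i - a j| := by
  have h : a i - hTau τ a θ z = ∑ j, softW τ θ z j * (a i - a j) := by
    simp only [hTau, mul_sub, sum_sub_distrib, ← sum_mul, sum_softW, one_mul]
    simp only [mul_comm]
  rw [h]
  refine (abs_sum_le_sum_abs _ _).trans (sum_le_sum fun j _ => ?_)
  rw [abs_mul, abs_of_nonneg (softW_nonneg τ θ z j)]
  exact mul_le_of_le_one_left (abs_nonneg _) (softW_le_one τ θ z j)

lemma hasDerivAt_hTau_update {i : Fin m} (hθi : θ i ≠ 0) :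
    HasDerivAt (fun t => hTau τ a (Function.update θ i t) z)
      (softW τ θ z i * (a i - hTau τ a θ z) / (τ * θ i)) (θ i) := by
  have he : ∀ j, HasDerivAt (fun t => exp ((log (Function.update θ i t j) + z j) / τ))
      (if j = i then exp ((log (θ i) + z i) / τ) * ((θ i)⁻¹ / τ) else 0) (θ i) := by
    intro j
    rcases eq_or_ne j i with rfl | hj
    · simpa using (((hasDerivAt_log hθi).add_const (z j)).div_const τ).exp
    · simpa [Function.update_of_ne hj, hj] using
        hasDerivAt_const (θ i) (exp ((log (θ j) + z j) / τ))
  have hden := HasDerivAt.fun_sum fun j (_ : j ∈ univ) => he j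
  have hnum := HasDerivAt.fun_sum fun j (_ : j ∈ univ) => (he j).const_mul (a j)
  have := hnum.fun_div hden (by simpa using (sum_exp_pos τ θ z).ne')
  refine (this.congr_deriv ?_).congr_of_eventuallyEq
    (Eventually.of_forall fun t => hTau_eq_div τ a _ z)
  simp only [mul_ite, mul_zero, sum_ite_eq', mem_univ, ↓reduceIte, Function.update_eq_self, softW,
    hTau_eq_div]
  field_simp

variable {a θ} {G : ℝ → ℝ}

lemma saGrad_eq (hG : DifferentiableAt ℝ G (hTau τ a θ z)) {i : Fin m} (hθi : θ i ≠ 0) :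
    saGrad τ a G θ i z =
      deriv G (hTau τ a θ z) * (softW τ θ z i * (a i - hTau τ a θ z) / (τ * θ i)) :=
  (hG.hasDerivAt.comp_of_eq (θ i) (hasDerivAt_hTau_update τ a θ z hθi)
    (by rw [Function.update_eq_self])).deriv

lemma abs_saGrad_le (hG : Differentiable ℝ G) {Gbar : ℝ}
    (hG' : ∀ x ∈ convexHull ℝ (Set.range a), |deriv G x| ≤ Gbar) {i : Fin m} (hθi : 0 < θ i)
    (hτ : 0 < τ) : |saGrad τ a G θ i z| ≤ Gbar * (∑ j, |a i - a j|) / θ i / τ := by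
  have hGbar := hG' _ (hTau_mem_convexHull τ a θ z)
  rw [saGrad_eq τ z (hG _) hθi.ne', abs_mul, abs_div, abs_mul, abs_of_pos (mul_pos hτ hθi),
    abs_of_nonneg (softW_nonneg τ θ z i)]
  calc |deriv G (hTau τ a θ z)| * (softW τ θ z i * |a i - hTau τ a θ z| / (τ * θ i))
      ≤ Gbar * (1 * (∑ j, |a i - a j|) / (τ * θ i)) := by
        gcongr
        exacts [div_nonneg (mul_nonneg (softW_nonneg τ θ z i) (abs_nonneg _)) (by positivity),
          (abs_nonneg _).trans hGbar, softW_le_one τ θ z i, abs_sub_hTau_le τ a θ z i]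
    _ = Gbar * (∑ j, |a i - a j|) / θ i / τ := by field_simp

end Softmax

lemma tendsto_integral_saGrad_pow_atTop {m : ℕ} [Nonempty (Fin m)] {a : Fin m → ℝ} {G : ℝ → ℝ}
    (hG : Differentiable ℝ G) {Gbar : ℝ}
    (hG' : ∀ x ∈ convexHull ℝ (Set.range a), |deriv G x| ≤ Gbar) {θ : Fin m → ℝ} {i : Fin m}
    (hθi : 0 < θ i) (μ : Measure (Fin m → ℝ)) [IsFiniteMeasure μ] {k : ℕ} (hk : k ≠ 0) :
    Tendsto (fun τ => ∫ z, saGrad τ a G θ i z ^ k ∂μ) atTop (𝓝 0) := by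
  refine tendsto_integral_zero_of_norm_le
    (g := fun τ => (Gbar * (∑ j, |a i - a j|) / θ i / τ) ^ k) ?_ ?_
  · filter_upwards [eventually_gt_atTop 0] with τ hτ z
    rw [norm_pow, Real.norm_eq_abs]
    exact pow_le_pow_left₀ (abs_nonneg _) (abs_saGrad_le τ z hG hG' hθi hτ) k
  · simpa [zero_pow hk] using (tendsto_const_nhds.div_atTop (tendsto_id (α := ℝ))).pow k

theorem smoothed_autodiff_beats_reinforce_general_general {m : ℕ}
    (a : Fin m → ℝ) (G : ℝ → ℝ) (hG : Differentiable ℝ G) (Gbar : ℝ)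
    (hG' : ∀ x ∈ convexHull ℝ (Set.range a), |deriv G x| ≤ Gbar)
    (θ : Fin m → ℝ) (hθ : ∀ j, 0 < θ j) (i : Fin m) (ε : ℝ) (hε : 0 < ε) (Di : ℝ)
    (N : ℕ) (hN : 0 < N) (hNle : (N : ℝ) ≤ Vrf a G θ i Di / (Di ^ 2 + ε)) :
    ∃ τ : ℝ, 0 < τ ∧
      ((∫ z, saGrad τ a G θ i z ∂(gumbelPi m)) - Di) ^ 2
          + (1 / (N : ℝ)) * saVar τ a G θ i ≤ Di ^ 2 + ε ∧
      Di ^ 2 + ε ≤ Vrf a G θ i Di / N := by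
  have : Nonempty (Fin m) := ⟨i⟩
  have hI1 := tendsto_integral_saGrad_pow_atTop hG hG' (hθ i) (gumbelPi m) one_ne_zero
  have hI2 := tendsto_integral_saGrad_pow_atTop hG hG' (hθ i) (gumbelPi m) two_ne_zero
  simp only [pow_one] at hI1
  have hmse : Tendsto (fun τ => ((∫ z, saGrad τ a G θ i z ∂(gumbelPi m)) - Di) ^ 2
      + (1 / (N : ℝ)) * saVar τ a G θ i) atTop (𝓝 (Di ^ 2)) := by
    simpa [saVar] using
      ((hI1.sub_const Di).pow 2).add ((hI2.sub (hI1.pow 2)).const_mul (1 / (N : ℝ)))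
  obtain ⟨τ, hτ, hmse_le⟩ := ((eventually_gt_atTop 0).and
    (hmse.eventually (ge_mem_nhds (lt_add_of_pos_right _ hε)))).exists
  refine ⟨τ, hτ, hmse_le, ?_⟩
  rw [le_div_iff₀ (Nat.cast_pos.2 hN)]
  rwa [le_div_iff₀ (by positivity), mul_comm] at hNle

/-- If `N ≤ V_i(θ)/(D_i(θ)² + ε)`, then there is a temperature `τ̃ > 0` at which the MSE of
the `N`-sample Smoothed-Autodiff estimator is at most `D_i(θ)² + ε`, which in turn is at
most the MSE `V_i(θ)/N` of the `N`-sample REINFORCE estimator. Here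
`D_i(θ) = ∂_{θ_i} E_θ[G]`. -/
theorem smoothed_autodiff_beats_reinforce_general {m : ℕ} (hm : 2 ≤ m)
    (a : Fin m → ℝ) (G : ℝ → ℝ) (hG : Differentiable ℝ G) (Gbar : ℝ)
    (hG' : ∀ x ∈ convexHull ℝ (Set.range a), |deriv G x| ≤ Gbar)
    (θ : Fin m → ℝ) (hθ : ∀ j, 0 < θ j) (i : Fin m) (ε : ℝ) (hε : 0 < ε) (Di : ℝ)
    (hD : HasDerivAt
      (fun t : ℝ => ∑ j, Function.update θ i t j * G (a j) / ∑ k, Function.update θ i t k)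
      Di (θ i))
    (N : ℕ) (hN : 0 < N) (hNle : (N : ℝ) ≤ Vrf a G θ i Di / (Di ^ 2 + ε)) :
    ∃ τ : ℝ, 0 < τ ∧
      ((∫ z, saGrad τ a G θ i z ∂(gumbelPi m)) - Di) ^ 2
          + (1 / (N : ℝ)) * saVar τ a G θ i ≤ Di ^ 2 + ε ∧
      Di ^ 2 + ε ≤ Vrf a G θ i Di / N :=
  smoothed_autodiff_beats_reinforce_general_general a G hG Gbar hG' θ hθ i ε hε Di N hN hNle
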